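/- arXiv:2510.06183 — 6 statements merged into one kernel-verified Lean document; each statement's English description precedes it below -/
import Mathlib

section
/- For every x > 0, the map s ↦ κ_s(x) is monotone decreasing on [0,1]; in particular κ_1(x) ≤ κ_s(x) ≤ κ_0(x) for all s ∈ [0,1], where κ_0(x) = (x+1)/(2x) and κ_1(x) = 2/(x+1). -/
noncomputable def kappa (s x : ℝ) : ℝ := ((1 + s) / 2) * (1 / (x + s) + 1 / (s * x + 1))

lemma kappa_key {x a b : ℝ} (hx : 0 < x) (ha : 0 ≤ a) (hab : a ≤ b) (hb : b ≤ 1) :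
    kappa b x ≤ kappa a x := by
  have hb0 : 0 ≤ b := le_trans ha hab
  have h1 : 0 < x + a := by linarith
  have h2 : 0 < a * x + 1 := by nlinarith
  have h3 : 0 < x + b := by linarith
  have h4 : 0 < b * x + 1 := by nlinarith
  have hab1 : 0 ≤ 1 - a * b := by nlinarith
  have key : kappa a x - kappa b x =
      ((b - a) * (x - 1) ^ 2 * (1 - a * b) * (1 + x)) /
        (2 * (x + a) * (a * x + 1) * (x + b) * (b * x + 1)) := by
    unfold kappa
    field_simp
    ring
  have hnum : 0 ≤ (b - a) * (x - 1) ^ 2 * (1 - a * b) * (1 + x) := by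
    apply mul_nonneg
    · apply mul_nonneg
      · exact mul_nonneg (by linarith) (sq_nonneg _)
      · exact hab1
    · linarith
  have hden : 0 < 2 * (x + a) * (a * x + 1) * (x + b) * (b * x + 1) := by positivity
  have := div_nonneg hnum hden.le
  linarith [key ▸ this]

theorem stmt1 : ∀ x : ℝ, 0 < x →
    AntitoneOn (fun s => kappa s x) (Set.Icc 0 1) ∧
    (∀ s ∈ Set.Icc (0:ℝ) 1, kappa 1 x ≤ kappa s x ∧ kappa s x ≤ kappa 0 x) ∧
    kappa 0 x = (x + 1) / (2 * x) ∧ kappa 1 x = 2 / (x + 1) := by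
  intro x hx
  refine ⟨?_, ?_, ?_, ?_⟩
  · intro a ha b hb hab
    exact kappa_key hx ha.1 hab hb.2
  · intro s hs
    exact ⟨kappa_key hx hs.1 hs.2 le_rfl, kappa_key hx le_rfl hs.1 hs.2⟩
  · unfold kappa
    field_simp
    ring
  · unfold kappa
    field_simp
    ring
end

section
/- For every s ∈ (0,1] and every x > 0, κ_1(x) ≤ κ_s(x) ≤ (κ_s(0^+)/2)·κ_1(x), where κ_s(0^+) = lim_{x→0^+} κ_s(x) = ((1+s)/2)·(1/s + 1) = (1+s)^2/(2s) and κ_1(x) = 2/(x+1). -/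
lemma kappa_zero {s : ℝ} (hs : s ≠ 0) : kappa s 0 = (1 + s) ^ 2 / (2 * s) := by
  simp only [kappa, zero_add, mul_zero]
  field_simp

lemma tendsto_kappa_nhdsGT_zero {s : ℝ} (hs : 0 < s) :
    Filter.Tendsto (kappa s) (nhdsWithin 0 (Set.Ioi 0)) (nhds ((1 + s) ^ 2 / (2 * s))) := by
  have hcont : ContinuousAt (kappa s) 0 := by
    unfold kappa
    fun_prop (disch := simp [hs.ne'])
  rw [← kappa_zero hs.ne']
  exact hcont.continuousWithinAt.tendsto

lemma kappa_sub_two_div {s x : ℝ} (hs : x + s ≠ 0) (hsx : s * x + 1 ≠ 0) (hx : x + 1 ≠ 0) :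
    kappa s x - 2 / (x + 1) = (1 - s) ^ 2 * (x - 1) ^ 2 / (2 * (x + 1) * (x + s) * (s * x + 1)) := by
  unfold kappa
  field_simp
  ring

lemma mul_two_div_sub_kappa {s x : ℝ} (hs : s ≠ 0) (hxs : x + s ≠ 0) (hsx : s * x + 1 ≠ 0)
    (hx : x + 1 ≠ 0) :
    (1 + s) ^ 2 / (2 * s) / 2 * (2 / (x + 1)) - kappa s x =
      (1 + s) ^ 2 * (1 - s) ^ 2 * x / (2 * s * (x + 1) * (x + s) * (s * x + 1)) := by
  unfold kappa
  field_simp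
  ring

lemma two_div_le_kappa {s x : ℝ} (hs : 0 < s) (hx : 0 < x) : 2 / (x + 1) ≤ kappa s x := by
  have hgap := kappa_sub_two_div (s := s) (x := x) (by positivity) (by positivity) (by positivity)
  have : 0 ≤ kappa s x - 2 / (x + 1) := by rw [hgap]; positivity
  linarith

lemma kappa_le_mul_two_div {s x : ℝ} (hs : 0 < s) (hx : 0 < x) :
    kappa s x ≤ (1 + s) ^ 2 / (2 * s) / 2 * (2 / (x + 1)) := by
  have hgap := mul_two_div_sub_kappa (s := s) (x := x) hs.ne' (by positivity) (by positivity)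
    (by positivity)
  have : 0 ≤ (1 + s) ^ 2 / (2 * s) / 2 * (2 / (x + 1)) - kappa s x := by rw [hgap]; positivity
  linarith

theorem stmt3 : ∀ s ∈ Set.Ioc (0:ℝ) 1,
    Filter.Tendsto (fun x => kappa s x) (nhdsWithin 0 (Set.Ioi 0))
      (nhds ((1 + s)^2 / (2 * s))) ∧
    ∀ x : ℝ, 0 < x →
      2 / (x + 1) ≤ kappa s x ∧ kappa s x ≤ ((1 + s)^2 / (2 * s) / 2) * (2 / (x + 1)) := by
  rintro s ⟨hs, -⟩
  exact ⟨tendsto_kappa_nhdsGT_zero hs, fun x hx =>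
    ⟨two_div_le_kappa hs hx, kappa_le_mul_two_div hs hx⟩⟩
end

section
/- The function x/κ_1(x), where κ_1(x) = 2/(x+1), is increasing in x on (0,∞); consequently for s ∈ (0,1] the ratio κ_s(x)/κ_1(x) attains its minimum value 1 at x = 1, is decreasing on (0,1), and increasing on (1,∞). -/
lemma div_add_one_sq_le_quarter (x : ℝ) : x / (x + 1) ^ 2 ≤ 1 / 4 := by
  rcases eq_or_ne (x + 1) 0 with hx | hx
  · simp [hx]
  · rw [div_le_iff₀ (by positivity)]
    nlinarith [sq_nonneg (x - 1)]

lemma monotoneOn_div_add_one_sq : MonotoneOn (fun x : ℝ => x / (x + 1) ^ 2) (Set.Icc 0 1) := by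
  intro x ⟨hx0, hx1⟩ y ⟨hy0, hy1⟩ hxy
  dsimp only
  rw [div_le_div_iff₀ (by positivity) (by positivity)]
  nlinarith [mul_nonneg (sub_nonneg.2 hxy) (sub_nonneg.2 (mul_le_one₀ hx1 hy0 hy1))]

lemma antitoneOn_div_add_one_sq : AntitoneOn (fun x : ℝ => x / (x + 1) ^ 2) (Set.Ici 1) := by
  intro x (hx : 1 ≤ x) y (hy : 1 ≤ y) hxy
  dsimp only
  rw [div_le_div_iff₀ (by positivity) (by positivity)]
  nlinarith [mul_nonneg (sub_nonneg.2 hxy) (sub_nonneg.2 (one_le_mul_of_one_le_of_one_le hx hy))]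

lemma kappa_one_right {s : ℝ} (hs : 1 + s ≠ 0) : kappa s 1 = 1 := by
  rw [kappa, mul_one, add_comm s 1, ← two_mul]
  field_simp

lemma kappa_div_eq {s x : ℝ} (hs : 0 < s) (hx : 0 < x) :
    kappa s x / (2 / (x + 1)) = (1 + s) ^ 2 / (4 * (s + (1 - s) ^ 2 * (x / (x + 1) ^ 2))) := by
  have : 0 < s + (1 - s) ^ 2 * (x / (x + 1) ^ 2) := by positivity
  unfold kappa
  field_simp
  ring

lemma one_le_kappa_div {s x : ℝ} (hs : 0 < s) (hx : 0 < x) : 1 ≤ kappa s x / (2 / (x + 1)) := by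
  rw [kappa_div_eq hs hx, one_le_div (by positivity)]
  nlinarith [mul_le_mul_of_nonneg_left (div_add_one_sq_le_quarter x) (sq_nonneg (1 - s))]

lemma antitoneOn_kappa_div {s : ℝ} (hs : 0 < s) :
    AntitoneOn (fun x => kappa s x / (2 / (x + 1))) (Set.Ioo 0 1) := by
  intro x hx y hy hxy
  dsimp only
  rw [kappa_div_eq hs hx.1, kappa_div_eq hs hy.1]
  have hx0 := hx.1
  gcongr _ / (4 * (_ + _ * ?_))
  exact monotoneOn_div_add_one_sq (Set.Ioo_subset_Icc_self hx) (Set.Ioo_subset_Icc_self hy) hxy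

lemma monotoneOn_kappa_div {s : ℝ} (hs : 0 < s) :
    MonotoneOn (fun x => kappa s x / (2 / (x + 1))) (Set.Ioi 1) := by
  intro x (hx : 1 < x) y (hy : 1 < y) hxy
  dsimp only
  have hy0 : 0 < y := by linarith
  rw [kappa_div_eq hs (by linarith), kappa_div_eq hs hy0]
  gcongr _ / (4 * (_ + _ * ?_))
  exact antitoneOn_div_add_one_sq hx.le hy.le hxy

lemma strictMonoOn_div_two_div_add_one :
    StrictMonoOn (fun x : ℝ => x / (2 / (x + 1))) (Set.Ioi 0) := by
  intro x (hx : 0 < x) y (hy : 0 < y) hxy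
  simp only [div_div_eq_mul_div]
  gcongr

theorem stmt4 :
    StrictMonoOn (fun x : ℝ => x / (2 / (x + 1))) (Set.Ioi 0) ∧
    ∀ s ∈ Set.Ioc (0:ℝ) 1,
      kappa s 1 / (2 / ((1:ℝ) + 1)) = 1 ∧
      (∀ x : ℝ, 0 < x → 1 ≤ kappa s x / (2 / (x + 1))) ∧
      AntitoneOn (fun x => kappa s x / (2 / (x + 1))) (Set.Ioo 0 1) ∧
      MonotoneOn (fun x => kappa s x / (2 / (x + 1))) (Set.Ioi 1) := by
  refine ⟨strictMonoOn_div_two_div_add_one, fun s ⟨hs, _⟩ => ⟨?_, fun x => one_le_kappa_div hs,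
    antitoneOn_kappa_div hs, monotoneOn_kappa_div hs⟩⟩
  rw [kappa_one_right (by positivity)]
  norm_num
end

section
/- Let f : (0,∞) → ℝ be convex with f(1) = 0, differentiable at 1 with f'(1) > (f(1) − f(0^+))/(1 − 0) where f(0^+) := lim_{x→0^+} f(x) exists in ℝ. For ε ∈ (0,1) and a sequence o(ε), consider the probability vectors p_ε = ((1−o(ε))/r,…,(1−o(ε))/r, o(ε)) and q_ε = ((1−ε)/r,…,(1−ε)/r, ε) in ℝ^{r+1} (first r coordinates equal). Then lim_{ε→0^+} (1/ε)·D_f(p_ε‖q_ε) = f'(1) + f(0^+), where D_f(p‖q) = Σ_i q_i f(p_i/q_i). In particular, if f is strictly convex at 1 this limit is strictly positive. -/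
/-!
Writing `x = (1 - o)/(1 - ε)` for the common ratio of the first `r` coordinates, the divergence
is `(1 - ε) f(x) + ε f(o/ε)`. Since `f 1 = 0`, the first term equals `(ε - o) · dslope f 1 x`,
so after dividing by `ε` it is `(1 - o/ε) · dslope f 1 x → f'(1)`, because `x → 1` and `dslope f 1`
is continuous at `1`; the second term is `f(o/ε) → f(0⁺)` because `o/ε → 0⁺`.
-/

open Filter Set Topology

lemma sum_fin_succ_ite_lt_mul_apply_div (g : ℝ → ℝ) {r : ℕ} (hr : r ≠ 0) (a b c d : ℝ) :
    ∑ i : Fin (r + 1), (if (i : ℕ) < r then c / r else d) *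
        g ((if (i : ℕ) < r then a / r else b) / (if (i : ℕ) < r then c / r else d)) =
      c * g (a / c) + d * g (b / d) := by
  have hr' : (r : ℝ) ≠ 0 := Nat.cast_ne_zero.2 hr
  simp only [Fin.sum_univ_castSucc, Fin.val_castSucc, Fin.is_lt, if_true, Fin.val_last,
    lt_irrefl, if_false, div_div_div_cancel_right₀ hr', Finset.sum_const, Finset.card_univ,
    Fintype.card_fin, nsmul_eq_mul]
  field_simp

lemma mul_apply_div_eq_sub_mul_dslope {f : ℝ → ℝ} (h1 : f 1 = 0) (a : ℝ) {c : ℝ} (hc : c ≠ 0) :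
    c * f (a / c) = (a - c) * dslope f 1 (a / c) := by
  have h := sub_smul_dslope f 1 (a / c)
  rw [h1, sub_zero, smul_eq_mul] at h
  rw [← h, ← mul_assoc, mul_sub, mul_div_cancel₀ a hc, mul_one]

lemma HasDerivAt.tendsto_dslope_comp {𝕜 E α : Type*} [NontriviallyNormedField 𝕜]
    [NormedAddCommGroup E] [NormedSpace 𝕜 E] {f : 𝕜 → E} {f' : E} {a : 𝕜} (hf : HasDerivAt f f' a)
    {x : α → 𝕜} {l : Filter α} (hx : Tendsto x l (𝓝 a)) :
    Tendsto (fun t => dslope f a (x t)) l (𝓝 f') := by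
  have := (continuousAt_dslope_same.2 hf.differentiableAt).tendsto.comp hx
  rwa [dslope_same, hf.deriv] at this

lemma tendsto_nhdsGT_zero_of_tendsto_div_self {o : ℝ → ℝ}
    (ho : Tendsto (fun ε => o ε / ε) (𝓝[>] 0) (𝓝 0)) : Tendsto o (𝓝[>] 0) (𝓝 0) := by
  refine (mul_zero (0 : ℝ) ▸ ho.mul (tendsto_nhdsWithin_of_tendsto_nhds tendsto_id)).congr' ?_
  filter_upwards [self_mem_nhdsWithin] with ε hε using div_mul_cancel₀ _ (ne_of_gt hε)

theorem stmt10_general (f : ℝ → ℝ) (f'1 f0 : ℝ) (r : ℕ) (o : ℝ → ℝ)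
    (h1 : f 1 = 0)
    (hderiv : HasDerivAt f f'1 1)
    (hlim : Filter.Tendsto f (nhdsWithin 0 (Set.Ioi 0)) (nhds f0))
    (hstrict : (f 1 - f0) / (1 - 0) < f'1)
    (hr : 1 ≤ r)
    (ho : Filter.Tendsto (fun ε => o ε / ε) (nhdsWithin 0 (Set.Ioi 0)) (nhds 0))
    (ho' : ∀ ε ∈ Set.Ioo (0:ℝ) 1, o ε ∈ Set.Ioo (0:ℝ) 1) :
    Filter.Tendsto
      (fun ε => (1 / ε) *
        ∑ i : Fin (r + 1),
          (if (i : ℕ) < r then (1 - ε) / (r : ℝ) else ε) *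
            f ((if (i : ℕ) < r then (1 - o ε) / (r : ℝ) else o ε) /
               (if (i : ℕ) < r then (1 - ε) / (r : ℝ) else ε)))
      (nhdsWithin 0 (Set.Ioi 0)) (nhds (f'1 + f0)) ∧ 0 < f'1 + f0 := by
  refine ⟨?_, by norm_num [h1] at hstrict; linarith⟩
  have hε : ∀ᶠ ε in 𝓝[>] (0:ℝ), ε ∈ Ioo (0:ℝ) 1 := Ioo_mem_nhdsGT one_pos
  have ho_pos : Tendsto (fun ε => o ε / ε) (𝓝[>] 0) (𝓝[>] 0) :=
    tendsto_nhdsWithin_iff.2 ⟨ho, hε.mono fun ε h => div_pos (ho' ε h).1 h.1⟩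
  have hx : Tendsto (fun ε => (1 - o ε) / (1 - ε)) (𝓝[>] 0) (𝓝 1) := by
    have : Tendsto (fun ε => (1 - o ε) / (1 - ε)) (𝓝[>] 0) (𝓝 ((1 - 0) / (1 - 0))) :=
      (tendsto_const_nhds.sub (tendsto_nhdsGT_zero_of_tendsto_div_self ho)).div
        (tendsto_const_nhds.sub (tendsto_nhdsWithin_of_tendsto_nhds tendsto_id)) (by norm_num)
    simpa using this
  have hlim' : Tendsto (fun ε => (1 - o ε / ε) * dslope f 1 ((1 - o ε) / (1 - ε)) + f (o ε / ε))
      (𝓝[>] 0) (𝓝 (f'1 + f0)) := by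
    simpa using (((tendsto_const_nhds (x := (1 : ℝ))).sub ho).mul
      (hderiv.tendsto_dslope_comp hx)).add (hlim.comp ho_pos)
  refine hlim'.congr' ?_
  filter_upwards [hε] with ε ⟨hε0, hε1⟩
  rw [sum_fin_succ_ite_lt_mul_apply_div f (by omega),
    mul_apply_div_eq_sub_mul_dslope h1 _ (by linarith)]
  field_simp
  ring

theorem stmt10 (f : ℝ → ℝ) (f'1 f0 : ℝ) (r : ℕ) (o : ℝ → ℝ)
    (hconv : ConvexOn ℝ (Set.Ioi 0) f) (h1 : f 1 = 0)
    (hderiv : HasDerivAt f f'1 1)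
    (hlim : Filter.Tendsto f (nhdsWithin 0 (Set.Ioi 0)) (nhds f0))
    (hstrict : (f 1 - f0) / (1 - 0) < f'1)
    (hr : 1 ≤ r)
    (ho : Filter.Tendsto (fun ε => o ε / ε) (nhdsWithin 0 (Set.Ioi 0)) (nhds 0))
    (ho' : ∀ ε ∈ Set.Ioo (0:ℝ) 1, o ε ∈ Set.Ioo (0:ℝ) 1) :
    Filter.Tendsto
      (fun ε => (1 / ε) *
        ∑ i : Fin (r + 1),
          (if (i : ℕ) < r then (1 - ε) / (r : ℝ) else ε) *
            f ((if (i : ℕ) < r then (1 - o ε) / (r : ℝ) else o ε) /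
               (if (i : ℕ) < r then (1 - ε) / (r : ℝ) else ε)))
      (nhdsWithin 0 (Set.Ioi 0)) (nhds (f'1 + f0)) ∧ 0 < f'1 + f0 :=
  stmt10_general f f'1 f0 r o h1 hderiv hlim hstrict hr ho ho'
end

section
/- Let f, g : (0,∞) → ℝ be continuous with f(1) = g(1) = 0, twice differentiable at 1 with f''(1), g''(1) > 0, f'(1) = g'(1) = 0, and suppose f(x), g(x) > 0 for all x ≠ 1, and that the limits f(0^+), g(0^+), f'(∞) := lim_{x→∞} f(x)/x, g'(∞) := lim_{x→∞} g(x)/x exist, are finite, and strictly positive. Then there exist constants 0 < α ≤ β < ∞ such that α·g(x) ≤ f(x) ≤ β·g(x) for all x ∈ (0,∞). -/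
/-!
The ratio `f / g` is continuous and positive on `(0, ∞) \ {1}` and has positive limits at the
three ends of this set: `f(0⁺) / g(0⁺)` at `0`, `f'(∞) / g'(∞)` at `∞`, and, by L'Hôpital's rule
applied to `f' / g'`, which tends to `f''(1) / g''(1)` as a quotient of slopes, at `1`.
Away from small neighbourhoods of the ends the set is compact, so `f / g` is bounded there
between positive constants, and hence on the whole set.
-/

open Filter Set Topology

theorem tendsto_div_nhdsNE_of_deriv_eq_zero {f g : ℝ → ℝ} {a f₂ g₂ : ℝ}
    (hfa : Tendsto f (𝓝[≠] a) (𝓝 0)) (hga : Tendsto g (𝓝[≠] a) (𝓝 0))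
    (hf' : deriv f a = 0) (hg' : deriv g a = 0)
    (hf'' : HasDerivAt (deriv f) f₂ a) (hg'' : HasDerivAt (deriv g) g₂ a)
    (hf₂ : f₂ ≠ 0) (hg₂ : g₂ ≠ 0) :
    Tendsto (fun x => f x / g x) (𝓝[≠] a) (𝓝 (f₂ / g₂)) := by
  -- `deriv f x ≠ 0` forces `f` to be differentiable at `x`, since `deriv` is `0` elsewhere.
  have hdf : ∀ᶠ x in 𝓝[≠] a, DifferentiableAt ℝ f x :=
    (hf''.eventually_ne (c := 0) hf₂).mono fun x hx =>
      by_contra fun h => hx (deriv_zero_of_not_differentiableAt h)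
  have hslope : Tendsto (fun x => slope (deriv f) a x / slope (deriv g) a x) (𝓝[≠] a)
      (𝓝 (f₂ / g₂)) :=
    (hasDerivAt_iff_tendsto_slope.1 hf'').div (hasDerivAt_iff_tendsto_slope.1 hg'') hg₂
  refine deriv.lhopital_zero_nhdsNE hdf (hg''.eventually_ne hg₂) hfa hga (hslope.congr' ?_)
  filter_upwards [self_mem_nhdsWithin] with x hx
  rw [slope_def_field, slope_def_field, hf', hg', sub_zero, sub_zero,
    div_div_div_cancel_right₀ (sub_ne_zero.2 hx)]

section PuncturedHalfLine

variable {r : ℝ → ℝ} {p : ℝ}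

theorem exists_pos_le_of_eventually_le {c : ℝ} (hc : 0 < c)
    (hr : ContinuousOn r (Ioi 0 \ {p})) (hpos : ∀ x ∈ Ioi 0 \ {p}, 0 < r x)
    (h0 : ∀ᶠ x in 𝓝[>] 0, c ≤ r x) (hp : ∀ᶠ x in 𝓝[≠] p, c ≤ r x)
    (htop : ∀ᶠ x in atTop, c ≤ r x) :
    ∃ a > 0, ∀ x ∈ Ioi 0 \ {p}, a ≤ r x := by
  obtain ⟨δ, hδ, h0⟩ := mem_nhdsGT_iff_exists_Ioo_subset.1 h0
  obtain ⟨ε, hε, hp⟩ := Metric.mem_nhdsWithin_iff.1 hp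
  obtain ⟨M, htop⟩ := eventually_atTop.1 htop
  have hK : Icc δ M \ Metric.ball p ε ⊆ Ioi 0 \ {p} := fun x hx =>
    ⟨lt_of_lt_of_le hδ hx.1.1, fun hxp => hx.2 (hxp ▸ Metric.mem_ball_self hε)⟩
  obtain ⟨a, ha, hKa⟩ := (isCompact_Icc.diff Metric.isOpen_ball).exists_forall_le'
    (hr.mono hK) fun x hx => hpos x (hK hx)
  refine ⟨min a c, lt_min ha hc, fun x hx => ?_⟩
  by_cases hxδ : x < δ
  · exact (min_le_right _ _).trans (h0 ⟨hx.1, hxδ⟩)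
  by_cases hxp : x ∈ Metric.ball p ε
  · exact (min_le_right _ _).trans (hp ⟨hxp, hx.2⟩)
  by_cases hxM : M ≤ x
  · exact (min_le_right _ _).trans (htop x hxM)
  exact (min_le_left _ _).trans (hKa x ⟨⟨not_lt.1 hxδ, (not_le.1 hxM).le⟩, hxp⟩)

variable {L₀ Lₚ Ltop : ℝ}

theorem exists_pos_le_of_tendsto
    (hr : ContinuousOn r (Ioi 0 \ {p})) (hpos : ∀ x ∈ Ioi 0 \ {p}, 0 < r x)
    (h0 : Tendsto r (𝓝[>] 0) (𝓝 L₀)) (hp : Tendsto r (𝓝[≠] p) (𝓝 Lₚ))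
    (htop : Tendsto r atTop (𝓝 Ltop)) (hL₀ : 0 < L₀) (hLₚ : 0 < Lₚ) (hLtop : 0 < Ltop) :
    ∃ a > 0, ∀ x ∈ Ioi 0 \ {p}, a ≤ r x := by
  have hL : 0 < min L₀ (min Lₚ Ltop) := lt_min hL₀ (lt_min hLₚ hLtop)
  have hc : min L₀ (min Lₚ Ltop) / 2 < min L₀ (min Lₚ Ltop) := half_lt_self hL
  exact exists_pos_le_of_eventually_le (half_pos hL) hr hpos
    (h0.eventually_const_le (hc.trans_le (min_le_left _ _)))
    (hp.eventually_const_le (hc.trans_le ((min_le_right _ _).trans (min_le_left _ _))))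
    (htop.eventually_const_le (hc.trans_le ((min_le_right _ _).trans (min_le_right _ _))))

theorem exists_pos_bounds_of_tendsto
    (hr : ContinuousOn r (Ioi 0 \ {p})) (hpos : ∀ x ∈ Ioi 0 \ {p}, 0 < r x)
    (h0 : Tendsto r (𝓝[>] 0) (𝓝 L₀)) (hp : Tendsto r (𝓝[≠] p) (𝓝 Lₚ))
    (htop : Tendsto r atTop (𝓝 Ltop)) (hL₀ : 0 < L₀) (hLₚ : 0 < Lₚ) (hLtop : 0 < Ltop) :
    ∃ a b, 0 < a ∧ ∀ x ∈ Ioi 0 \ {p}, a ≤ r x ∧ r x ≤ b := by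
  obtain ⟨a, ha, hra⟩ := exists_pos_le_of_tendsto hr hpos h0 hp htop hL₀ hLₚ hLtop
  obtain ⟨b, hb, hrb⟩ := exists_pos_le_of_tendsto (r := fun x => (r x)⁻¹)
    (hr.inv₀ fun x hx => (hpos x hx).ne') (fun x hx => inv_pos.2 (hpos x hx))
    (h0.inv₀ hL₀.ne') (hp.inv₀ hLₚ.ne') (htop.inv₀ hLtop.ne')
    (inv_pos.2 hL₀) (inv_pos.2 hLₚ) (inv_pos.2 hLtop)
  exact ⟨a, b⁻¹, ha, fun x hx => ⟨hra x hx, (le_inv_comm₀ hb (hpos x hx)).1 (hrb x hx)⟩⟩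

end PuncturedHalfLine

theorem stmt11_general (f g : ℝ → ℝ) (f0 g0 finf ginf : ℝ)
    (hfc : ContinuousOn f (Set.Ioi 0)) (hgc : ContinuousOn g (Set.Ioi 0))
    (hf1 : f 1 = 0) (hg1 : g 1 = 0)
    (hfd2 : DifferentiableAt ℝ (deriv f) 1) (hgd2 : DifferentiableAt ℝ (deriv g) 1)
    (hf'1 : deriv f 1 = 0) (hg'1 : deriv g 1 = 0)
    (hf''1 : 0 < deriv (deriv f) 1) (hg''1 : 0 < deriv (deriv g) 1)
    (hfpos : ∀ x : ℝ, 0 < x → x ≠ 1 → 0 < f x)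
    (hgpos : ∀ x : ℝ, 0 < x → x ≠ 1 → 0 < g x)
    (hf0 : Filter.Tendsto f (nhdsWithin 0 (Set.Ioi 0)) (nhds f0))
    (hg0 : Filter.Tendsto g (nhdsWithin 0 (Set.Ioi 0)) (nhds g0))
    (hfinf : Filter.Tendsto (fun x => f x / x) Filter.atTop (nhds finf))
    (hginf : Filter.Tendsto (fun x => g x / x) Filter.atTop (nhds ginf))
    (hf0pos : 0 < f0) (hg0pos : 0 < g0) (hfinfpos : 0 < finf) (hginfpos : 0 < ginf) :
    ∃ α β : ℝ, 0 < α ∧ α ≤ β ∧ ∀ x : ℝ, 0 < x → α * g x ≤ f x ∧ f x ≤ β * g x := by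
  have hf1' : Tendsto f (𝓝[≠] 1) (𝓝 0) :=
    hf1 ▸ (hfc.continuousAt (Ioi_mem_nhds one_pos)).tendsto.mono_left nhdsWithin_le_nhds
  have hg1' : Tendsto g (𝓝[≠] 1) (𝓝 0) :=
    hg1 ▸ (hgc.continuousAt (Ioi_mem_nhds one_pos)).tendsto.mono_left nhdsWithin_le_nhds
  have hlim1 := tendsto_div_nhdsNE_of_deriv_eq_zero hf1' hg1' hf'1 hg'1
    hfd2.hasDerivAt hgd2.hasDerivAt hf''1.ne' hg''1.ne'
  have hlimtop : Tendsto (fun x => f x / g x) atTop (𝓝 (finf / ginf)) :=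
    (hfinf.div hginf hginfpos.ne').congr' <|
      (eventually_ne_atTop 0).mono fun x hx => div_div_div_cancel_right₀ hx _ _
  obtain ⟨α, β, hα, hαβ⟩ := exists_pos_bounds_of_tendsto (r := fun x => f x / g x)
    ((hfc.mono sdiff_subset).div (hgc.mono sdiff_subset) fun x hx => (hgpos x hx.1 hx.2).ne')
    (fun x hx => div_pos (hfpos x hx.1 hx.2) (hgpos x hx.1 hx.2))
    (hf0.div hg0 hg0pos.ne') hlim1 hlimtop
    (div_pos hf0pos hg0pos) (div_pos hf''1 hg''1) (div_pos hfinfpos hginfpos)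
  refine ⟨α, β, hα, (hαβ 2 (by norm_num)).elim le_trans, fun x hx => ?_⟩
  rcases eq_or_ne x 1 with rfl | hx1
  · simp [hf1, hg1]
  have hgx := hgpos x hx hx1
  obtain ⟨hαx, hβx⟩ := hαβ x ⟨hx, hx1⟩
  exact ⟨(le_div_iff₀ hgx).1 hαx, (div_le_iff₀ hgx).1 hβx⟩

theorem stmt11 (f g : ℝ → ℝ) (f0 g0 finf ginf : ℝ)
    (hfc : ContinuousOn f (Set.Ioi 0)) (hgc : ContinuousOn g (Set.Ioi 0))
    (hf1 : f 1 = 0) (hg1 : g 1 = 0)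
    (hfd : DifferentiableAt ℝ f 1) (hgd : DifferentiableAt ℝ g 1)
    (hfd2 : DifferentiableAt ℝ (deriv f) 1) (hgd2 : DifferentiableAt ℝ (deriv g) 1)
    (hf'1 : deriv f 1 = 0) (hg'1 : deriv g 1 = 0)
    (hf''1 : 0 < deriv (deriv f) 1) (hg''1 : 0 < deriv (deriv g) 1)
    (hfpos : ∀ x : ℝ, 0 < x → x ≠ 1 → 0 < f x)
    (hgpos : ∀ x : ℝ, 0 < x → x ≠ 1 → 0 < g x)
    (hf0 : Filter.Tendsto f (nhdsWithin 0 (Set.Ioi 0)) (nhds f0))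
    (hg0 : Filter.Tendsto g (nhdsWithin 0 (Set.Ioi 0)) (nhds g0))
    (hfinf : Filter.Tendsto (fun x => f x / x) Filter.atTop (nhds finf))
    (hginf : Filter.Tendsto (fun x => g x / x) Filter.atTop (nhds ginf))
    (hf0pos : 0 < f0) (hg0pos : 0 < g0) (hfinfpos : 0 < finf) (hginfpos : 0 < ginf) :
    ∃ α β : ℝ, 0 < α ∧ α ≤ β ∧ ∀ x : ℝ, 0 < x → α * g x ≤ f x ∧ f x ≤ β * g x :=
  stmt11_general f g f0 g0 finf ginf hfc hgc hf1 hg1 hfd2 hgd2 hf'1 hg'1 hf''1 hg''1 hfpos hgpos hf0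
    hg0 hfinf hginf hf0pos hg0pos hfinfpos hginfpos
end

section
/- In a finite-dimensional inner product space with norm ‖·‖, let N, M, P be vectors satisfying N = (1−ε)·M + ε·P for some ε ∈ (0, 1/2), and suppose ‖P‖^2 ≤ c‖N‖^2 for some c > 0. Then ‖N‖^2 ≥ ((1−ε)(1−2ε)/(1 + cε(1−2ε)))·‖M‖^2. -/
lemma mul_norm_le_of_eq_smul_add_smul {E : Type*} [SeminormedAddCommGroup E] [NormedSpace ℝ E]
    {N M P : E} {a b : ℝ} (ha : 0 ≤ a) (hb : 0 ≤ b) (h : N = a • M + b • P) :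
    a * ‖M‖ ≤ ‖N‖ + b * ‖P‖ := by
  calc a * ‖M‖ = ‖N - b • P‖ := by rw [h, add_sub_cancel_right, norm_smul_of_nonneg ha]
    _ ≤ ‖N‖ + ‖b • P‖ := norm_sub_le _ _
    _ = ‖N‖ + b * ‖P‖ := by rw [norm_smul_of_nonneg hb]

lemma add_sq_le_mul_sq_div_add_sq_div {x y a b : ℝ} (ha : 0 < a) (hb : 0 < b) :
    (x + y) ^ 2 ≤ (a + b) * (x ^ 2 / a + y ^ 2 / b) := by
  have := Finset.sq_sum_div_le_sum_sq_div Finset.univ ![x, y] (g := ![a, b])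
    (by simp [Fin.forall_fin_two, ha, hb])
  simp only [Fin.sum_univ_two, Matrix.cons_val_zero, Matrix.cons_val_one] at this
  rwa [div_le_iff₀ (by positivity), mul_comm] at this

theorem stmt14_general {V : Type*} [NormedAddCommGroup V] [InnerProductSpace ℝ V]
    (N M P : V) (ε c : ℝ)
    (hε : ε ∈ Set.Ioo (0:ℝ) (1/2)) (hc : 0 < c)
    (hN : N = (1 - ε) • M + ε • P)
    (hP : ‖P‖^2 ≤ c * ‖N‖^2) :
    ((1 - ε) * (1 - 2*ε) / (1 + c * ε * (1 - 2*ε))) * ‖M‖^2 ≤ ‖N‖^2 := by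
  obtain ⟨hε0, hε2⟩ := hε
  have h1ε : 0 < 1 - ε := by linarith
  have h12ε : 0 < 1 - 2 * ε := by linarith
  have htri : (1 - ε) * ‖M‖ ≤ ‖N‖ + ε * ‖P‖ :=
    mul_norm_le_of_eq_smul_add_smul h1ε.le hε0.le hN
  -- Sedrakyan with weights `1 - 2ε` and `ε`, which add up to `1 - ε`.
  have key : (1 - ε) * (1 - 2*ε) * ‖M‖^2 ≤ (1 + c * ε * (1 - 2*ε)) * ‖N‖^2 :=
    calc (1 - ε) * (1 - 2*ε) * ‖M‖^2 = (1 - 2*ε) / (1 - ε) * ((1 - ε) * ‖M‖) ^ 2 := by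
          field_simp
      _ ≤ (1 - 2*ε) / (1 - ε) * (‖N‖ + ε * ‖P‖) ^ 2 := by gcongr
      _ ≤ (1 - 2*ε) / (1 - ε) * ((1 - 2*ε + ε) * (‖N‖^2 / (1 - 2*ε) + (ε * ‖P‖)^2 / ε)) := by
          gcongr; exact add_sq_le_mul_sq_div_add_sq_div h12ε hε0
      _ = ‖N‖^2 + ε * (1 - 2*ε) * ‖P‖^2 := by field_simp; ring
      _ ≤ ‖N‖^2 + ε * (1 - 2*ε) * (c * ‖N‖^2) := by gcongr
      _ = (1 + c * ε * (1 - 2*ε)) * ‖N‖^2 := by ring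
  rw [div_mul_eq_mul_div, div_le_iff₀ (by positivity)]
  linarith

theorem stmt14 {V : Type*} [NormedAddCommGroup V] [InnerProductSpace ℝ V]
    [FiniteDimensional ℝ V] (N M P : V) (ε c : ℝ)
    (hε : ε ∈ Set.Ioo (0:ℝ) (1/2)) (hc : 0 < c)
    (hN : N = (1 - ε) • M + ε • P)
    (hP : ‖P‖^2 ≤ c * ‖N‖^2) :
    ((1 - ε) * (1 - 2*ε) / (1 + c * ε * (1 - 2*ε))) * ‖M‖^2 ≤ ‖N‖^2 :=
  stmt14_general N M P ε c hε hc hN hP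
end
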